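/- The function F(γ) = (∑ᵢ νᵢ xᵢ(0)/γᵢ)/(∑ᵢ νᵢ/γᵢ), as a function of a single coordinate γⱼ ∈ (0,∞) with the other coordinates fixed, is monotone: it is nondecreasing in γⱼ if xⱼ(0) ≤ F(γ) and nonincreasing if xⱼ(0) ≥ F(γ). Consequently, on a box [γ̲, γ̄] (entrywise, with 0 < γ̲ᵢ ≤ γ̄ᵢ), the minimum and maximum of F are attained at a point where each coordinate equals either γ̲ᵢ or γ̄ᵢ. -/

import Mathlib

/-!
`F γ` is the centre of mass of the values `x0 i` with weights `ν i / γ i`. Changing the single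
weight `w j` by `d` moves the mean by `d * (x0 j - F γ) / ∑ w'`, so raising `γ j` (which lowers
`w j`) moves `F` away from `x0 j`, and lowering it moves `F` towards `x0 j`. Hence from any point
of the box one of the two endpoint values of each coordinate does not increase `F` (and one does
not decrease it); pushing the coordinates to endpoints one at a time reaches a vertex, and the
extremum over the finitely many vertices is the extremum over the box.
-/

open BigOperators Finset

section Vertices

variable {ι α β : Type*} [Fintype ι] [DecidableEq ι] [Preorder α] [LinearOrder β]
  (lo hi : ι → α) (f : (ι → α) → β)

theorem exists_vertex_le_of_update_le
    (hf : ∀ γ, (∀ i, lo i ≤ γ i ∧ γ i ≤ hi i) → ∀ j,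
      f (Function.update γ j (lo j)) ≤ f γ ∨ f (Function.update γ j (hi j)) ≤ f γ)
    (γ : ι → α) (hγ : ∀ i, lo i ≤ γ i ∧ γ i ≤ hi i) :
    ∃ v, (∀ i, v i = lo i ∨ v i = hi i) ∧ f v ≤ f γ := by
  suffices h : ∀ s : Finset ι, ∀ γ, (∀ i, lo i ≤ γ i ∧ γ i ≤ hi i) →
      (∀ i ∉ s, γ i = lo i ∨ γ i = hi i) → ∃ v, (∀ i, v i = lo i ∨ v i = hi i) ∧ f v ≤ f γ from
    h univ γ hγ fun i hi => absurd (mem_univ i) hi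
  intro s
  induction s using Finset.induction_on with
  | empty => exact fun γ _ hvert => ⟨γ, fun i => hvert i (notMem_empty i), le_rfl⟩
  | @insert a s _ ih =>
    intro γ hγ hvert
    have step : ∀ c, lo a ≤ c → c ≤ hi a → c = lo a ∨ c = hi a →
        f (Function.update γ a c) ≤ f γ →
        ∃ v, (∀ i, v i = lo i ∨ v i = hi i) ∧ f v ≤ f γ := by
      intro c hlo hhi hc hle
      obtain ⟨v, hv, hfv⟩ := ih (Function.update γ a c)
        (fun i => by rcases eq_or_ne i a with rfl | h <;> simp [*])
        (fun i hi => by rcases eq_or_ne i a with rfl | h <;> simp_all)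
      exact ⟨v, hv, hfv.trans hle⟩
    have hbox := hγ a
    rcases hf γ hγ a with hle | hle
    · exact step _ le_rfl (hbox.1.trans hbox.2) (Or.inl rfl) hle
    · exact step _ (hbox.1.trans hbox.2) le_rfl (Or.inr rfl) hle

theorem exists_vertex_forall_le
    (hf : ∀ γ, (∀ i, lo i ≤ γ i ∧ γ i ≤ hi i) → ∀ j,
      f (Function.update γ j (lo j)) ≤ f γ ∨ f (Function.update γ j (hi j)) ≤ f γ) :
    ∃ v, (∀ i, v i = lo i ∨ v i = hi i) ∧ ∀ γ, (∀ i, lo i ≤ γ i ∧ γ i ≤ hi i) → f v ≤ f γ := by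
  have hfin : {v : ι → α | ∀ i, v i = lo i ∨ v i = hi i}.Finite :=
    (Set.Finite.pi fun i => Set.toFinite {lo i, hi i}).subset fun v hv i _ => hv i
  obtain ⟨v, hv, hmin⟩ := Set.exists_min_image _ f hfin ⟨lo, fun i => Or.inl rfl⟩
  refine ⟨v, hv, fun γ hγ => ?_⟩
  obtain ⟨u, hu, hfu⟩ := exists_vertex_le_of_update_le lo hi f hf γ hγ
  exact (hmin u hu).trans hfu

theorem exists_vertex_forall_ge
    (hf : ∀ γ, (∀ i, lo i ≤ γ i ∧ γ i ≤ hi i) → ∀ j,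
      f γ ≤ f (Function.update γ j (lo j)) ∨ f γ ≤ f (Function.update γ j (hi j))) :
    ∃ v, (∀ i, v i = lo i ∨ v i = hi i) ∧ ∀ γ, (∀ i, lo i ≤ γ i ∧ γ i ≤ hi i) → f γ ≤ f v :=
  exists_vertex_forall_le (β := βᵒᵈ) lo hi (OrderDual.toDual ∘ f) hf

end Vertices

section CenterMass

variable {ι : Type*}

theorem Finset.sum_sub_sum_of_eq_of_ne {t : Finset ι} {j : ι} (hj : j ∈ t) {w w' : ι → ℝ}
    (h : ∀ i ∈ t, i ≠ j → w' i = w i) : ∑ i ∈ t, w' i - ∑ i ∈ t, w i = w' j - w j := by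
  rw [← sum_sub_distrib]
  exact sum_eq_single_of_mem j hj fun i hi hij => by rw [h i hi hij, sub_self]

theorem Finset.centerMass_sub_centerMass {t : Finset ι} {j : ι} (hj : j ∈ t) {w w' : ι → ℝ}
    (h : ∀ i ∈ t, i ≠ j → w' i = w i) (x : ι → ℝ)
    (hw : ∑ i ∈ t, w i ≠ 0) (hw' : ∑ i ∈ t, w' i ≠ 0) :
    t.centerMass w' x - t.centerMass w x =
      (w' j - w j) * (x j - t.centerMass w x) / ∑ i ∈ t, w' i := by
  have hB := sum_sub_sum_of_eq_of_ne hj h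
  have hA := sum_sub_sum_of_eq_of_ne hj (w := fun i => w i * x i) (w' := fun i => w' i * x i)
    fun i hi hij => by simp only [h i hi hij]
  simp only [centerMass, smul_eq_mul] at *
  generalize ∑ i ∈ t, w' i * x i = A' at *
  generalize ∑ i ∈ t, w' i = B' at *
  rw [sub_eq_iff_eq_add] at hA hB
  subst hA hB
  field_simp
  ring

end CenterMass

section InverseWeights

variable {ι : Type*} [Fintype ι]

theorem sum_mul_div_div_sum_div_eq_centerMass (ν x γ : ι → ℝ) :
    (∑ i, ν i * x i / γ i) / ∑ i, ν i / γ i = univ.centerMass (ν / γ) x := by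
  simp only [centerMass, Pi.div_apply, smul_eq_mul, div_eq_inv_mul, mul_assoc]

variable [DecidableEq ι] {ν γ : ι → ℝ} (hν : ∀ i, 0 < ν i) (hγ : ∀ i, 0 < γ i) {j : ι}
  (x : ι → ℝ)
include hν hγ

theorem exists_pos_centerMass_div_update_sub {c : ℝ} (hc : 0 < c) :
    ∃ k > 0, univ.centerMass (ν / Function.update γ j c) x - univ.centerMass (ν / γ) x =
      (γ j - c) * (x j - univ.centerMass (ν / γ) x) * k := by
  have hγ' : ∀ i, 0 < Function.update γ j c i :=
    (Function.forall_update_iff _ (p := fun _ b => 0 < b)).mpr ⟨hc, fun i _ => hγ i⟩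
  have hsum : ∀ γ : ι → ℝ, (∀ i, 0 < γ i) → 0 < ∑ i, (ν / γ) i := fun γ hγ =>
    sum_pos (fun i _ => div_pos (hν i) (hγ i)) ⟨j, mem_univ j⟩
  refine ⟨ν j / (c * γ j) / ∑ i, (ν / Function.update γ j c) i,
    div_pos (div_pos (hν j) (mul_pos hc (hγ j))) (hsum _ hγ'), ?_⟩
  rw [centerMass_sub_centerMass (mem_univ j) (fun i _ hi => by simp [Function.update_of_ne hi]) x
    (hsum γ hγ).ne' (hsum _ hγ').ne']
  simp only [Pi.div_apply, Function.update_self]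
  field_simp [(hγ j).ne', hc.ne']

theorem centerMass_div_le_centerMass_div_update_iff {c : ℝ} (hc : 0 < c) :
    univ.centerMass (ν / γ) x ≤ univ.centerMass (ν / Function.update γ j c) x ↔
      0 ≤ (γ j - c) * (x j - univ.centerMass (ν / γ) x) := by
  obtain ⟨k, hk, h⟩ := exists_pos_centerMass_div_update_sub hν hγ x hc
  rw [← sub_nonneg, h, mul_nonneg_iff_of_pos_right hk]

theorem centerMass_div_update_le_centerMass_div_iff {c : ℝ} (hc : 0 < c) :
    univ.centerMass (ν / Function.update γ j c) x ≤ univ.centerMass (ν / γ) x ↔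
      (γ j - c) * (x j - univ.centerMass (ν / γ) x) ≤ 0 := by
  obtain ⟨k, hk, h⟩ := exists_pos_centerMass_div_update_sub hν hγ x hc
  rw [← sub_nonpos, h, ← neg_nonneg, ← neg_mul, mul_nonneg_iff_of_pos_right hk, neg_nonneg]

theorem centerMass_div_update_le_or_update_le {a b : ℝ} (ha₀ : 0 < a) (ha : a ≤ γ j)
    (hb : γ j ≤ b) :
    univ.centerMass (ν / Function.update γ j a) x ≤ univ.centerMass (ν / γ) x ∨
      univ.centerMass (ν / Function.update γ j b) x ≤ univ.centerMass (ν / γ) x := by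
  rw [centerMass_div_update_le_centerMass_div_iff hν hγ x ha₀,
    centerMass_div_update_le_centerMass_div_iff hν hγ x (ha₀.trans_le (ha.trans hb))]
  rcases le_total (x j) (univ.centerMass (ν / γ) x) with h | h
  · exact .inl (mul_nonpos_of_nonneg_of_nonpos (sub_nonneg.2 ha) (sub_nonpos.2 h))
  · exact .inr (mul_nonpos_of_nonpos_of_nonneg (sub_nonpos.2 hb) (sub_nonneg.2 h))

theorem le_centerMass_div_update_or_le_update {a b : ℝ} (ha₀ : 0 < a) (ha : a ≤ γ j)
    (hb : γ j ≤ b) :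
    univ.centerMass (ν / γ) x ≤ univ.centerMass (ν / Function.update γ j a) x ∨
      univ.centerMass (ν / γ) x ≤ univ.centerMass (ν / Function.update γ j b) x := by
  rw [centerMass_div_le_centerMass_div_update_iff hν hγ x ha₀,
    centerMass_div_le_centerMass_div_update_iff hν hγ x (ha₀.trans_le (ha.trans hb))]
  rcases le_total (x j) (univ.centerMass (ν / γ) x) with h | h
  · exact .inr (mul_nonneg_of_nonpos_of_nonpos (sub_nonpos.2 hb) (sub_nonpos.2 h))
  · exact .inl (mul_nonneg (sub_nonneg.2 ha) (sub_nonneg.2 h))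

end InverseWeights

theorem F_coordinatewise_monotone_and_extrema_at_vertices_general
    {n : ℕ} (ν x0 lo hi : Fin n → ℝ)
    (hν : ∀ i, 0 < ν i)
    (hlo : ∀ i, 0 < lo i) :
    -- F(γ) := (∑ᵢ νᵢ xᵢ(0)/γᵢ)/(∑ᵢ νᵢ/γᵢ)
    (∀ (γ γ' : Fin n → ℝ) (j : Fin n),
      (∀ i, 0 < γ i) → (∀ i, 0 < γ' i) → (∀ i, i ≠ j → γ i = γ' i) → γ j ≤ γ' j →
      (x0 j ≤ (∑ i, ν i * x0 i / γ i) / (∑ i, ν i / γ i) →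
        (∑ i, ν i * x0 i / γ i) / (∑ i, ν i / γ i) ≤
          (∑ i, ν i * x0 i / γ' i) / (∑ i, ν i / γ' i)) ∧
      ((∑ i, ν i * x0 i / γ i) / (∑ i, ν i / γ i) ≤ x0 j →
        (∑ i, ν i * x0 i / γ' i) / (∑ i, ν i / γ' i) ≤
          (∑ i, ν i * x0 i / γ i) / (∑ i, ν i / γ i))) ∧
    (∃ γmin : Fin n → ℝ, (∀ i, γmin i = lo i ∨ γmin i = hi i) ∧
      ∀ γ : Fin n → ℝ, (∀ i, lo i ≤ γ i ∧ γ i ≤ hi i) →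
        (∑ i, ν i * x0 i / γmin i) / (∑ i, ν i / γmin i) ≤
          (∑ i, ν i * x0 i / γ i) / (∑ i, ν i / γ i)) ∧
    (∃ γmax : Fin n → ℝ, (∀ i, γmax i = lo i ∨ γmax i = hi i) ∧
      ∀ γ : Fin n → ℝ, (∀ i, lo i ≤ γ i ∧ γ i ≤ hi i) →
        (∑ i, ν i * x0 i / γ i) / (∑ i, ν i / γ i) ≤
          (∑ i, ν i * x0 i / γmax i) / (∑ i, ν i / γmax i)) := by
  simp only [sum_mul_div_div_sum_div_eq_centerMass]
  have hpos : ∀ γ : Fin n → ℝ, (∀ i, lo i ≤ γ i ∧ γ i ≤ hi i) → ∀ i, 0 < γ i :=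
    fun γ hγ i => (hlo i).trans_le (hγ i).1
  refine ⟨fun γ γ' j hγ hγ' heq hle => ?_, exists_vertex_forall_le lo hi _ fun γ hγ j => ?_,
    exists_vertex_forall_ge lo hi _ fun γ hγ j => ?_⟩
  · rw [Function.eq_update_iff.mpr ⟨rfl, fun i hi => (heq i hi).symm⟩,
      centerMass_div_le_centerMass_div_update_iff hν hγ x0 (hγ' j),
      centerMass_div_update_le_centerMass_div_iff hν hγ x0 (hγ' j)]
    exact ⟨fun h => mul_nonneg_of_nonpos_of_nonpos (sub_nonpos.2 hle) (sub_nonpos.2 h),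
      fun h => mul_nonpos_of_nonpos_of_nonneg (sub_nonpos.2 hle) (sub_nonneg.2 h)⟩
  · exact centerMass_div_update_le_or_update_le hν (hpos γ hγ) x0 (hlo j) (hγ j).1 (hγ j).2
  · exact le_centerMass_div_update_or_le_update hν (hpos γ hγ) x0 (hlo j) (hγ j).1 (hγ j).2

theorem F_coordinatewise_monotone_and_extrema_at_vertices
    {n : ℕ} (ν x0 lo hi : Fin n → ℝ)
    (hν : ∀ i, 0 < ν i) (hνsum : ∑ i, ν i = 1)
    (hlo : ∀ i, 0 < lo i) (hlohi : ∀ i, lo i ≤ hi i) :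
    -- F(γ) := (∑ᵢ νᵢ xᵢ(0)/γᵢ)/(∑ᵢ νᵢ/γᵢ)
    (∀ (γ γ' : Fin n → ℝ) (j : Fin n),
      (∀ i, 0 < γ i) → (∀ i, 0 < γ' i) → (∀ i, i ≠ j → γ i = γ' i) → γ j ≤ γ' j →
      (x0 j ≤ (∑ i, ν i * x0 i / γ i) / (∑ i, ν i / γ i) →
        (∑ i, ν i * x0 i / γ i) / (∑ i, ν i / γ i) ≤
          (∑ i, ν i * x0 i / γ' i) / (∑ i, ν i / γ' i)) ∧
      ((∑ i, ν i * x0 i / γ i) / (∑ i, ν i / γ i) ≤ x0 j →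
        (∑ i, ν i * x0 i / γ' i) / (∑ i, ν i / γ' i) ≤
          (∑ i, ν i * x0 i / γ i) / (∑ i, ν i / γ i))) ∧
    (∃ γmin : Fin n → ℝ, (∀ i, γmin i = lo i ∨ γmin i = hi i) ∧
      ∀ γ : Fin n → ℝ, (∀ i, lo i ≤ γ i ∧ γ i ≤ hi i) →
        (∑ i, ν i * x0 i / γmin i) / (∑ i, ν i / γmin i) ≤
          (∑ i, ν i * x0 i / γ i) / (∑ i, ν i / γ i)) ∧
    (∃ γmax : Fin n → ℝ, (∀ i, γmax i = lo i ∨ γmax i = hi i) ∧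
      ∀ γ : Fin n → ℝ, (∀ i, lo i ≤ γ i ∧ γ i ≤ hi i) →
        (∑ i, ν i * x0 i / γ i) / (∑ i, ν i / γ i) ≤
          (∑ i, ν i * x0 i / γmax i) / (∑ i, ν i / γmax i)) :=
  F_coordinatewise_monotone_and_extrema_at_vertices_general ν x0 lo hi hν hlo
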